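/- Let A be a measurable space, μ a probability measure on A, Z, Z' : A → ℝ bounded measurable functions, and φ : A → ℝ a bounded measurable function. Then the real function t ↦ ∫_A φ(a) π(Z + t·Z')(da) is differentiable at t = 0, with derivative ∫_A φ(a)·( Z'(a) - ∫_A Z' dπ(Z) ) π(Z)(da). -/

import Mathlib

/-!
Tilting is transitive: `π(Z + t Z')` is the tilt of `ν := π(Z)` by `t Z'`, so
`∫ φ dπ(Z + t Z') = (∫ φ e^{t Z'} dν) / (∫ e^{t Z'} dν)`. Since `Z'` is bounded, both integrals
can be differentiated under the integral sign, with derivatives `∫ φ Z' dν` and `∫ Z' dν` at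
`t = 0`, where the denominator is `1`. The quotient rule then gives the covariance
`∫ φ Z' dν - ∫ φ dν · ∫ Z' dν`.
-/

open MeasureTheory

/-- The Gibbs measure associated with a measurable function `Z : A → ℝ` and reference
probability measure `μ`: the measure absolutely continuous with respect to `μ` with density
`a ↦ exp (Z a) / ∫ exp (Z a') μ(da')`. -/
noncomputable def gibbs {A : Type*} [MeasurableSpace A] (μ : Measure A) (Z : A → ℝ) :
    Measure A :=
  μ.withDensity fun a => ENNReal.ofReal (Real.exp (Z a) / ∫ a', Real.exp (Z a') ∂μ)

open Real Filter

section

variable {A : Type*} [MeasurableSpace A]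

theorem gibbs_eq_tilted (μ : Measure A) (Z : A → ℝ) : gibbs μ Z = μ.tilted Z := rfl

theorem integral_tilted_eq_div (μ : Measure A) (f g : A → ℝ) :
    ∫ a, g a ∂(μ.tilted f) = (∫ a, g a * exp (f a) ∂μ) / ∫ a, exp (f a) ∂μ := by
  rw [integral_tilted, ← integral_div]
  congr 1 with a
  rw [smul_eq_mul]
  ring

theorem hasDerivAt_integral_mul_exp_mul {μ : Measure A} {h Y : A → ℝ} {C : ℝ}
    (hh : Integrable h μ) (hY : AEStronglyMeasurable Y μ) (hYC : ∀ a, |Y a| ≤ C) :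
    HasDerivAt (fun t => ∫ a, h a * exp (t * Y a) ∂μ) (∫ a, h a * Y a ∂μ) 0 := by
  have hexp (t : ℝ) : AEStronglyMeasurable (fun a => exp (t * Y a)) μ :=
    continuous_exp.comp_aestronglyMeasurable (hY.const_mul t)
  have hbound (a : A) (t : ℝ) (ht : t ∈ Metric.ball (0 : ℝ) 1) :
      ‖h a * (exp (t * Y a) * Y a)‖ ≤ ‖h a‖ * (exp C * C) := by
    have ht' : |t| ≤ 1 := by
      rw [mem_ball_zero_iff, Real.norm_eq_abs] at ht
      exact ht.le
    have htY : t * Y a ≤ C := calc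
      t * Y a ≤ |t| * |Y a| := (le_abs_self _).trans (abs_mul _ _).le
      _ ≤ 1 * C := mul_le_mul ht' (hYC a) (abs_nonneg _) zero_le_one
      _ = C := one_mul C
    rw [norm_mul, norm_mul, norm_of_nonneg (exp_pos _).le, Real.norm_eq_abs]
    gcongr
    exact hYC a
  have key := hasDerivAt_integral_of_dominated_loc_of_deriv_le (Metric.ball_mem_nhds 0 one_pos)
    (F := fun t a => h a * exp (t * Y a)) (F' := fun t a => h a * (exp (t * Y a) * Y a))
    (Eventually.of_forall fun t => hh.1.mul (hexp t)) (by simpa using hh)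
    (hh.1.mul ((hexp 0).mul hY)) (ae_of_all _ hbound) (hh.norm.mul_const _)
    (ae_of_all _ fun a t _ => ((hasDerivAt_mul_const (Y a)).exp.const_mul (h a)))
  simpa using key.2

theorem hasDerivAt_integral_tilted_mul {ν : Measure A} [IsProbabilityMeasure ν] {φ Y : A → ℝ}
    {C : ℝ} (hφ : Integrable φ ν) (hY : AEStronglyMeasurable Y ν) (hYC : ∀ a, |Y a| ≤ C) :
    HasDerivAt (fun t => ∫ a, φ a ∂(ν.tilted fun a => t * Y a))
      (∫ a, φ a * (Y a - ∫ a', Y a' ∂ν) ∂ν) 0 := by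
  have hYbdd : ∀ᵐ a ∂ν, ‖Y a‖ ≤ C := ae_of_all _ fun a => (Real.norm_eq_abs _).trans_le (hYC a)
  have hN := hasDerivAt_integral_mul_exp_mul hφ hY hYC
  have hD := hasDerivAt_integral_mul_exp_mul (integrable_const (1 : ℝ)) hY hYC
  have hratio : (fun t => ∫ a, φ a ∂(ν.tilted fun a => t * Y a))
      = fun t => (∫ a, φ a * exp (t * Y a) ∂ν) / ∫ a, 1 * exp (t * Y a) ∂ν := by
    funext t
    rw [integral_tilted_eq_div]
    simp only [one_mul]
  rw [hratio]
  refine (hN.div hD (by simp)).congr_deriv ?_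
  simp only [zero_mul, exp_zero, mul_one, one_mul, integral_const, probReal_univ, smul_eq_mul,
    one_pow, div_one]
  simp_rw [mul_sub]
  rw [integral_sub (hφ.mul_bdd hY hYbdd) (hφ.mul_const _), integral_mul_const]

end

/-- directional derivative of the Gibbs map. For a probability measure
`μ`, bounded measurable `Z, Z' : A → ℝ` and a bounded measurable `φ : A → ℝ`, the map
`t ↦ ∫ φ dπ(Z + t·Z')` is differentiable at `t = 0` with derivative
`∫ φ(a)·(Z'(a) - ∫ Z' dπ(Z)) dπ(Z)(a)`. -/
theorem hasDerivAt_integral_gibbs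
    {A : Type*} [MeasurableSpace A] (μ : Measure A) [IsProbabilityMeasure μ]
    (Z Z' φ : A → ℝ) (hZmeas : Measurable Z) (hZ'meas : Measurable Z')
    (hφmeas : Measurable φ)
    (hZb : ∃ C, ∀ a, |Z a| ≤ C) (hZ'b : ∃ C, ∀ a, |Z' a| ≤ C)
    (hφb : ∃ C, ∀ a, |φ a| ≤ C) :
    HasDerivAt (fun t : ℝ => ∫ a, φ a ∂(gibbs μ fun a' => Z a' + t * Z' a'))
      (∫ a, φ a * (Z' a - ∫ a', Z' a' ∂(gibbs μ Z)) ∂(gibbs μ Z)) 0 := by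
  obtain ⟨C, hC⟩ := hZb
  obtain ⟨C', hC'⟩ := hZ'b
  obtain ⟨Cφ, hCφ⟩ := hφb
  have hexpZ : Integrable (fun a => exp (Z a)) μ :=
    .of_bound hZmeas.exp.aestronglyMeasurable (exp C)
      (ae_of_all _ fun a => by simpa using exp_le_exp.2 (abs_le.1 (hC a)).2)
  have : IsProbabilityMeasure (μ.tilted Z) := isProbabilityMeasure_tilted hexpZ
  have hφ : Integrable φ (μ.tilted Z) :=
    .of_bound hφmeas.aestronglyMeasurable Cφ
      (ae_of_all _ fun a => (Real.norm_eq_abs _).trans_le (hCφ a))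
  have htilted (t : ℝ) :
      μ.tilted (fun a => Z a + t * Z' a) = (μ.tilted Z).tilted fun a => t * Z' a :=
    (tilted_tilted hexpZ _).symm
  simp_rw [gibbs_eq_tilted, htilted]
  exact hasDerivAt_integral_tilted_mul hφ hZ'meas.aestronglyMeasurable hC'
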